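/- arXiv:1809.05769 — 4 statements merged into one kernel-verified Lean document; each statement's English description precedes it below -/
import Mathlib

section
/- Let P_n := (1/(2^n · n!)) • D^n[(X² − 1)^n] be the n-th Legendre polynomial over ℝ, where D^n denotes the n-fold formal derivative (Rodrigues' formula). Then for every n ≥ 1, the formal derivative of P_n equals Σ_j (2j+1) • P_j, where the sum ranges over all j with 0 ≤ j ≤ n−1 and n − j odd. -/
open Polynomial

/-- The `n`-th Legendre polynomial over `ℝ`, via the Rodrigues formula
`P_n = (1/(2^n · n!)) • Dⁿ[(X² − 1)ⁿ]`. -/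
noncomputable def legendre (n : ℕ) : Polynomial ℝ :=
  (1 / (2 ^ n * (n.factorial : ℝ))) • derivative^[n] ((X ^ 2 - 1) ^ n)

/-! With `f m = (X² - 1)^m`, the identity `X · (f (m+1))' = 2(m+1) (f (m+1) + f m)` (as
`X² = (X² - 1) + 1`), differentiated `m + 1` times with the Leibniz rule, together with
`(f (m+2))' = 2(m+2) X f (m+1)` gives the recurrence `P_{m+2}' = (2m+3) P_{m+1} + P_m'`.
The theorem follows from it by two-step induction, starting from `P_0' = 0` and `P_1' = P_0`. -/

section Rodrigues

variable {R : Type*} [CommRing R]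

theorem derivative_X_sq_sub_one_pow_succ (m : ℕ) :
    derivative ((X ^ 2 - 1 : R[X]) ^ (m + 1)) = (2 * (m + 1)) • (X * (X ^ 2 - 1) ^ m) := by
  rw [derivative_pow, derivative_sub, derivative_X_pow, derivative_one]
  simp only [nsmul_eq_mul, C_eq_natCast]
  push_cast
  ring

theorem X_mul_iterate_derivative_X_sq_sub_one_pow_succ (m : ℕ) :
    X * derivative^[m + 2] ((X ^ 2 - 1 : R[X]) ^ (m + 1)) =
      (m + 1) • derivative^[m + 1] ((X ^ 2 - 1) ^ (m + 1)) +
        (2 * (m + 1)) • derivative^[m + 1] ((X ^ 2 - 1 : R[X]) ^ m) := by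
  have key : derivative ((X ^ 2 - 1 : R[X]) ^ (m + 1)) * X =
      (2 * (m + 1)) • ((X ^ 2 - 1) ^ (m + 1) + (X ^ 2 - 1) ^ m) := by
    rw [derivative_X_sq_sub_one_pow_succ]
    simp only [nsmul_eq_mul]
    ring
  have h := congrArg (derivative^[m + 1]) key
  rw [iterate_derivative_derivative_mul_X, iterate_derivative_smul, iterate_map_add] at h
  rw [mul_comm X]
  linear_combination (norm := module) h

theorem iterate_derivative_X_sq_sub_one_pow_add_two (m : ℕ) :
    derivative^[m + 3] ((X ^ 2 - 1 : R[X]) ^ (m + 2)) =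
      (2 * (m + 2) * (2 * m + 3)) • derivative^[m + 1] ((X ^ 2 - 1) ^ (m + 1)) +
        (4 * (m + 2) * (m + 1)) • derivative^[m + 1] ((X ^ 2 - 1 : R[X]) ^ m) := by
  rw [Function.iterate_succ_apply, derivative_X_sq_sub_one_pow_succ, iterate_derivative_smul,
    mul_comm X, iterate_derivative_mul_X, mul_comm _ X,
    X_mul_iterate_derivative_X_sq_sub_one_pow_succ]
  simp only [smul_add, smul_smul, Nat.reduceSubDiff]
  module

end Rodrigues

theorem derivative_legendre (n : ℕ) :
    derivative (legendre n) =
      (1 / (2 ^ n * (n.factorial : ℝ))) • derivative^[n + 1] ((X ^ 2 - 1) ^ n) := by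
  rw [legendre, derivative_smul, Function.iterate_succ_apply']

theorem derivative_legendre_add_two (m : ℕ) :
    derivative (legendre (m + 2)) =
      (2 * (m : ℝ) + 3) • legendre (m + 1) + derivative (legendre m) := by
  rw [derivative_legendre, iterate_derivative_X_sq_sub_one_pow_add_two, derivative_legendre,
    legendre, ← Nat.cast_smul_eq_nsmul ℝ, ← Nat.cast_smul_eq_nsmul ℝ]
  have hm : (m.factorial : ℝ) ≠ 0 := by positivity
  simp only [Nat.factorial_succ, smul_add, smul_smul]
  match_scalars <;> field_simp <;> ring

theorem legendre_zero : legendre 0 = 1 := by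
  simp [legendre]

theorem legendre_one : legendre 1 = X := by
  rw [legendre, Function.iterate_one, pow_one, derivative_X_sq_sub_one_pow_succ,
    ← Nat.cast_smul_eq_nsmul ℝ, smul_smul]
  norm_num

theorem filter_odd_sub_range_add_two (m : ℕ) :
    (Finset.range (m + 2)).filter (fun j => Odd (m + 2 - j)) =
      insert (m + 1) ((Finset.range m).filter (fun j => Odd (m - j))) := by
  ext j
  simp only [Finset.mem_filter, Finset.mem_insert, Finset.mem_range, Nat.odd_iff]
  omega

theorem legendre_derivative_eq_general
    (n : ℕ) :
    derivative (legendre n) =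
      ∑ j ∈ (Finset.range n).filter (fun j => Odd (n - j)),
        (2 * (j : ℝ) + 1) • legendre j := by
  induction n using Nat.twoStepInduction with
  | zero => simp [legendre_zero]
  | one => simp [Finset.filter_singleton, legendre_zero, legendre_one]
  | more m ih _ =>
    have hm : m + 1 ∉ (Finset.range m).filter (fun j => Odd (m - j)) := by simp
    rw [derivative_legendre_add_two, filter_odd_sub_range_add_two, Finset.sum_insert hm, ih]
    congr 2
    push_cast
    ring

/-- For `n ≥ 1`, the derivative of the `n`-th Legendre polynomial is
`P_n' = Σ_j (2j+1) • P_j`, the sum being over `0 ≤ j ≤ n − 1` with `n − j` odd. -/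
theorem legendre_derivative_eq
    (n : ℕ) (hn : 1 ≤ n) :
    derivative (legendre n) =
      ∑ j ∈ (Finset.range n).filter (fun j => Odd (n - j)),
        (2 * (j : ℝ) + 1) • legendre j :=
  legendre_derivative_eq_general n
end

section
/- Let n be a natural number, let φ be any basis of the real vector space P_n of polynomials of degree at most n, let D_φ be the differentiation matrix, let V be the (n+1)×(n+1) matrix whose (j,k) entry is the j-th coordinate of X^k/k! in the basis φ, and let J be the (n+1)×(n+1) nilpotent Jordan block with ones on the superdiagonal. Then the matrix D⁺ := V · Jᵀ · V⁻¹ is a generalized inverse of D_φ: it satisfies D_φ · D⁺ · D_φ = D_φ and D⁺ · D_φ · D⁺ = D⁺. -/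
open Matrix

/-- The differentiation map `p ↦ p'` on the space `P_n` of real polynomials of
degree at most `n` (realized as `Polynomial.degreeLT ℝ (n+1)`). -/
noncomputable def diffMap (n : ℕ) :
    Polynomial.degreeLT ℝ (n + 1) →ₗ[ℝ] Polynomial.degreeLT ℝ (n + 1) :=
  (Polynomial.derivative (R := ℝ)).restrict fun p hp =>
    Polynomial.mem_degreeLT.mpr
      (lt_of_le_of_lt Polynomial.degree_derivative_le (Polynomial.mem_degreeLT.mp hp))

/-- The element `X^k / k!` of `P_n`, for `k ≤ n`. -/
noncomputable def scaledMonomial (n : ℕ) (k : Fin (n + 1)) :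
    Polynomial.degreeLT ℝ (n + 1) :=
  ⟨(((k : ℕ).factorial : ℝ))⁻¹ • Polynomial.X ^ (k : ℕ), by
    rw [Polynomial.mem_degreeLT]
    calc
      Polynomial.degree ((((k : ℕ).factorial : ℝ))⁻¹ • Polynomial.X ^ (k : ℕ))
          ≤ Polynomial.degree (Polynomial.X ^ (k : ℕ) : Polynomial ℝ) :=
        Polynomial.degree_smul_le _ _
      _ = ((k : ℕ) : WithBot ℕ) := Polynomial.degree_X_pow _
      _ < ((n + 1 : ℕ) : WithBot ℕ) := by exact_mod_cast k.2⟩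

/-! In the basis `ψ k = X^k / k!` differentiation sends `ψ (k+1)` to `ψ k` and `ψ 0` to `0`, so its
matrix is the nilpotent Jordan block `J`, and `V` is the change of basis from `ψ` to `φ`; hence
`D_φ = V J V⁻¹`. Since `J Jᵀ` is the diagonal projection killing the last coordinate, `J Jᵀ J = J`
and `Jᵀ J Jᵀ = Jᵀ`, and these identities survive conjugation by `V`. -/

theorem conj_mul_conj_of_mul_eq_one {M : Type*} [Monoid M] {p q : M} (h : q * p = 1) (a b : M) :
    p * a * q * (p * b * q) = p * (a * b) * q := by
  simp only [← mul_assoc]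
  rw [mul_assoc (p * a) q p, h, mul_one]

namespace Matrix

variable (R : Type*) [Semiring R]

def nilpotentJordanBlock (m : ℕ) : Matrix (Fin m) (Fin m) R :=
  of fun i j => if (j : ℕ) = i + 1 then 1 else 0

variable {R} {m : ℕ}

theorem nilpotentJordanBlock_mul_transpose :
    nilpotentJordanBlock R m * (nilpotentJordanBlock R m)ᵀ =
      diagonal fun i : Fin m => if (i : ℕ) + 1 < m then 1 else 0 := by
  ext i k
  rw [mul_apply, diagonal_apply]
  simp only [nilpotentJordanBlock, transpose_apply, of_apply, ite_zero_mul_ite_zero, mul_one]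
  by_cases hi : (i : ℕ) + 1 < m
  · have key : ∀ l : Fin m, ((l : ℕ) = i + 1 ∧ (l : ℕ) = k + 1) ↔ (l = ⟨i + 1, hi⟩ ∧ i = k) := by
      intro l; simp only [Fin.ext_iff]; omega
    simp only [key, ite_and, Finset.sum_ite_eq', Finset.mem_univ, if_true, hi]
  · rw [Finset.sum_eq_zero fun l _ => if_neg (by omega)]
    simp [hi]

theorem nilpotentJordanBlock_mul_transpose_mul_self :
    nilpotentJordanBlock R m * (nilpotentJordanBlock R m)ᵀ * nilpotentJordanBlock R m =
      nilpotentJordanBlock R m := by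
  ext i j
  rw [nilpotentJordanBlock_mul_transpose, diagonal_mul]
  simp only [nilpotentJordanBlock, of_apply]
  split_ifs <;> first | (exfalso; omega) | simp

theorem transpose_mul_nilpotentJordanBlock_mul_transpose {R : Type*} [CommSemiring R] :
    (nilpotentJordanBlock R m)ᵀ * nilpotentJordanBlock R m * (nilpotentJordanBlock R m)ᵀ =
      (nilpotentJordanBlock R m)ᵀ := by
  have h := congrArg transpose (nilpotentJordanBlock_mul_transpose_mul_self (R := R) (m := m))
  rwa [transpose_mul, transpose_mul, transpose_transpose, ← Matrix.mul_assoc] at h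

end Matrix

open Polynomial

noncomputable def scaledMonomialBasis (n : ℕ) :
    Module.Basis (Fin (n + 1)) ℝ (degreeLT ℝ (n + 1)) :=
  (degreeLT.basis ℝ (n + 1)).unitsSMul fun k =>
    Units.mk0 ((k : ℕ).factorial : ℝ)⁻¹ (by positivity)

theorem coe_scaledMonomialBasis (n : ℕ) : ⇑(scaledMonomialBasis n) = scaledMonomial n := by
  ext k : 1
  apply Subtype.ext
  simp [scaledMonomialBasis, scaledMonomial, Module.Basis.unitsSMul_apply]

theorem diffMap_scaledMonomial_zero (n : ℕ) : diffMap n (scaledMonomial n 0) = 0 := by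
  apply Subtype.ext
  simp [diffMap, scaledMonomial]

theorem diffMap_scaledMonomial_succ (n : ℕ) (k : Fin n) :
    diffMap n (scaledMonomial n k.succ) = scaledMonomial n k.castSucc := by
  apply Subtype.ext
  simp only [diffMap, scaledMonomial, LinearMap.coe_restrict_apply, derivative_smul,
    derivative_X_pow, Fin.val_succ, Fin.val_castSucc, Nat.factorial_succ]
  rw [Nat.add_sub_cancel, ← smul_eq_C_mul, smul_smul]
  congr 1
  push_cast
  field_simp

theorem toMatrix_scaledMonomialBasis_diffMap (n : ℕ) :
    LinearMap.toMatrix (scaledMonomialBasis n) (scaledMonomialBasis n) (diffMap n) =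
      nilpotentJordanBlock ℝ (n + 1) := by
  ext i j
  rw [LinearMap.toMatrix_apply, coe_scaledMonomialBasis]
  cases j using Fin.cases with
  | zero => simp [diffMap_scaledMonomial_zero, nilpotentJordanBlock]
  | succ k =>
    rw [diffMap_scaledMonomial_succ, ← coe_scaledMonomialBasis, Module.Basis.repr_self]
    simp [nilpotentJordanBlock, Finsupp.single_apply, Fin.ext_iff, eq_comm]

/-- For any basis `φ` of `P_n`, with `V` the matrix whose `k`-th column is the
coordinate vector of `X^k/k!` in the basis `φ` and `J` the nilpotent Jordan block,
the matrix `D⁺ = V · Jᵀ · V⁻¹` is a generalized inverse of the differentiation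
matrix `D_φ`: it satisfies `D · D⁺ · D = D` and `D⁺ · D · D⁺ = D⁺`. -/
theorem diffMatrix_generalized_inverse
    (n : ℕ) (φ : Module.Basis (Fin (n + 1)) ℝ (Polynomial.degreeLT ℝ (n + 1)))
    (V J : Matrix (Fin (n + 1)) (Fin (n + 1)) ℝ)
    (hV : ∀ j k, V j k = φ.repr (scaledMonomial n k) j)
    (hJ : ∀ i j, J i j = if (j : ℕ) = (i : ℕ) + 1 then 1 else 0) :
    LinearMap.toMatrix φ φ (diffMap n) * (V * Jᵀ * V⁻¹) *
        LinearMap.toMatrix φ φ (diffMap n) = LinearMap.toMatrix φ φ (diffMap n) ∧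
      (V * Jᵀ * V⁻¹) * LinearMap.toMatrix φ φ (diffMap n) * (V * Jᵀ * V⁻¹) =
        V * Jᵀ * V⁻¹ := by
  replace hJ : J = nilpotentJordanBlock ℝ (n + 1) := Matrix.ext hJ
  replace hV : V = φ.toMatrix (scaledMonomialBasis n) := by
    ext j k
    rw [hV, Module.Basis.toMatrix_apply, coe_scaledMonomialBasis]
  set W := (scaledMonomialBasis n).toMatrix φ
  have hWV : W * V = 1 := hV ▸ Module.Basis.toMatrix_mul_toMatrix_flip _ _
  have hD : LinearMap.toMatrix φ φ (diffMap n) = V * J * W := by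
    rw [hV, hJ, ← toMatrix_scaledMonomialBasis_diffMap,
      basis_toMatrix_mul_linearMap_toMatrix_mul_basis_toMatrix]
  rw [hD, inv_eq_left_inv hWV]
  simp only [conj_mul_conj_of_mul_eq_one hWV, hJ, nilpotentJordanBlock_mul_transpose_mul_self,
    transpose_mul_nilpotentJordanBlock_mul_transpose, and_self]
end

section
/- Let τ_0, …, τ_n be pairwise distinct real numbers with barycentric weights β_k = Π_{j ≠ k}(τ_k − τ_j)⁻¹, and define the Lagrange differentiation matrix D by d_{ij} = β_j / (β_i · (τ_i − τ_j)) for i ≠ j and d_{ii} = − Σ_{j ≠ i} d_{ij}. Then for every polynomial p over ℝ of degree at most n and every index i, the derivative satisfies p'(τ_i) = Σ_{j=0}^{n} d_{ij} · p(τ_j). (That is, D maps the vector of values of p at the nodes to the vector of values of p' at the nodes.) -/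
open Polynomial Finset

private lemma basis_eq (n : ℕ) (τ : Fin (n + 1) → ℝ) (β : Fin (n + 1) → ℝ)
    (hβ : ∀ k, β k = ∏ j ∈ Finset.univ.erase k, (τ k - τ j)⁻¹) (j : Fin (n + 1)) :
    Lagrange.basis Finset.univ τ j
      = C (β j) * ∏ k ∈ Finset.univ.erase j, (X - C (τ k)) := by
  rw [Lagrange.basis, hβ]
  simp_rw [Lagrange.basisDivisor]
  rw [Finset.prod_mul_distrib, map_prod]

private lemma deriv_basis_off (n : ℕ) (τ : Fin (n + 1) → ℝ) (hτ : Function.Injective τ)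
    (β : Fin (n + 1) → ℝ)
    (hβ : ∀ k, β k = ∏ j ∈ Finset.univ.erase k, (τ k - τ j)⁻¹)
    (i j : Fin (n + 1)) (hij : i ≠ j) :
    (derivative (Lagrange.basis Finset.univ τ j)).eval (τ i)
      = β j / (β i * (τ i - τ j)) := by
  have hi : i ∈ Finset.univ.erase j := Finset.mem_erase.2 ⟨hij, Finset.mem_univ i⟩
  rw [basis_eq n τ β hβ j, ← Finset.mul_prod_erase _ _ hi]
  rw [derivative_mul, derivative_C, zero_mul, zero_add, derivative_mul, derivative_sub,
    derivative_X, derivative_C, sub_zero]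
  simp only [eval_add, eval_mul, eval_C, eval_one, eval_sub, eval_X, sub_self, zero_mul,
    add_zero, one_mul, eval_prod]
  -- now: β j * ∏ k ∈ (univ.erase j).erase i, (τ i - τ k) = β j / (β i * (τ i - τ j))
  have hne : ∀ k ∈ (Finset.univ.erase i), τ i - τ k ≠ 0 := by
    intro k hk
    have := (Finset.mem_erase.1 hk).1
    exact sub_ne_zero.2 fun h => this (hτ h).symm
  have hβi : β i = (∏ k ∈ Finset.univ.erase i, (τ i - τ k))⁻¹ := by
    rw [hβ, Finset.prod_inv_distrib]
  have hj : j ∈ Finset.univ.erase i := Finset.mem_erase.2 ⟨hij.symm, Finset.mem_univ j⟩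
  have hsplit : ∏ k ∈ Finset.univ.erase i, (τ i - τ k)
      = (τ i - τ j) * ∏ k ∈ (Finset.univ.erase i).erase j, (τ i - τ k) :=
    (Finset.mul_prod_erase _ _ hj).symm
  have hcomm : (Finset.univ.erase j).erase i = (Finset.univ.erase i).erase j :=
    Finset.erase_right_comm
  have hP : (∏ k ∈ Finset.univ.erase i, (τ i - τ k)) ≠ 0 :=
    Finset.prod_ne_zero_iff.2 hne
  rw [hcomm, hβi, div_eq_mul_inv, mul_inv, inv_inv, hsplit]
  have hij' : τ i - τ j ≠ 0 := hne j hj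
  field_simp

/-- The Lagrange differentiation matrix `d`, with `d_{ij} = β_j/(β_i (τ_i − τ_j))`
off the diagonal and `d_{ii} = −Σ_{j ≠ i} d_{ij}`, maps the vector of values of a
polynomial `p` of degree at most `n` at the nodes to the vector of values of `p'`
at the nodes: `p'(τ_i) = Σ_j d_{ij} p(τ_j)`. -/
theorem lagrange_differentiation_matrix
    (n : ℕ) (τ : Fin (n + 1) → ℝ) (hτ : Function.Injective τ)
    (β : Fin (n + 1) → ℝ)
    (hβ : ∀ k, β k = ∏ j ∈ Finset.univ.erase k, (τ k - τ j)⁻¹)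
    (d : Matrix (Fin (n + 1)) (Fin (n + 1)) ℝ)
    (hoff : ∀ i j, i ≠ j → d i j = β j / (β i * (τ i - τ j)))
    (hdiag : ∀ i, d i i = -∑ j ∈ Finset.univ.erase i, d i j)
    (p : Polynomial ℝ) (hp : p.degree ≤ (n : ℕ)) (i : Fin (n + 1)) :
    (derivative p).eval (τ i) = ∑ j, d i j * p.eval (τ j) := by
  have hinj : Set.InjOn τ ↑(Finset.univ : Finset (Fin (n + 1))) := hτ.injOn
  -- key: derivative of each basis at τ i equals d i j
  have key : ∀ j, (derivative (Lagrange.basis Finset.univ τ j)).eval (τ i) = d i j := by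
    intro j
    by_cases hij : i = j
    · subst hij
      -- use sum of basis = 1
      have hsum : ∑ j, Lagrange.basis Finset.univ τ j = 1 :=
        Lagrange.sum_basis hinj Finset.univ_nonempty
      have hder : ∑ j, (derivative (Lagrange.basis Finset.univ τ j)).eval (τ i) = 0 := by
        rw [← eval_finset_sum, ← derivative_sum, hsum, derivative_one, eval_zero]
      have hsplit := Finset.add_sum_erase Finset.univ
        (fun j => (derivative (Lagrange.basis Finset.univ τ j)).eval (τ i))
        (Finset.mem_univ i)
      have heq : ∑ j ∈ Finset.univ.erase i,
          (derivative (Lagrange.basis Finset.univ τ j)).eval (τ i)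
          = ∑ j ∈ Finset.univ.erase i, d i j := by
        refine Finset.sum_congr rfl fun j hj => ?_
        have hij' : i ≠ j := fun h => (Finset.mem_erase.1 hj).1 h.symm
        rw [deriv_basis_off n τ hτ β hβ i j hij', hoff i j hij']
      have h1 : (derivative (Lagrange.basis Finset.univ τ i)).eval (τ i)
          + ∑ j ∈ Finset.univ.erase i, d i j = 0 := by
        rw [← heq]; exact hsplit.trans hder
      rw [hdiag i]; linarith
    · rw [deriv_basis_off n τ hτ β hβ i j hij, hoff i j hij]
  have hplt : p.degree < (Finset.univ : Finset (Fin (n + 1))).card := by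
    rw [Finset.card_univ, Fintype.card_fin]
    exact lt_of_le_of_lt hp (by exact_mod_cast Nat.lt_succ_self n)
  have hrep : p = ∑ j, C (p.eval (τ j)) * Lagrange.basis Finset.univ τ j := by
    have := Lagrange.eq_interpolate hinj hplt
    rw [Lagrange.interpolate_apply] at this
    exact this
  conv_lhs => rw [hrep]
  rw [derivative_sum, eval_finset_sum]
  refine Finset.sum_congr rfl fun j _ => ?_
  rw [derivative_mul, derivative_C, zero_mul, zero_add, eval_mul, eval_C, key j, mul_comm]
end

section
/- Let φ : ℕ → ℝ[X] with φ_0 = 1, and let α, β, γ : ℕ → ℝ with α_j ≠ 0 for all j, such that X·φ_0 = α_0 φ_1 + β_0 φ_0 and, for all j ≥ 1, X·φ_j = α_j φ_{j+1} + β_j φ_j + γ_j φ_{j−1}. Let Q : ℕ → ℕ → ℝ satisfy: Q_{i,j} = 0 whenever i = 0, j = 0, or j > i; Q_{i,i} = i / α_{i−1} for all i ≥ 1; and for all i > j ≥ 1, Q_{i,j} = (1/α_{i−1}) · ((β_{j−1} − β_{i−1}) Q_{i−1,j} + a_{j} Q_{i−1,j−1} + γ_j Q_{i−1,j+1} − γ_{i−1}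 Q_{i−2,j}), where a_j := α_{j−2} if j ≥ 2 and a_1 := 0 (the term with a zero index is omitted; note Q_{i−1,0} = 0 in any case). Then for every i ≥ 1, the formal derivative satisfies φ_i' = Σ_{j=1}^{i} Q_{i,j} · φ_{j−1}. (This gives the general structure of the differentiation matrix for any degree-graded basis satisfying a three-term recurrence.) -/
open Polynomial

/-- General structure of the differentiation matrix for a degree-graded basis
satisfying a three-term recurrence: if `φ_0 = 1`,
`X φ_0 = α_0 φ_1 + β_0 φ_0`, and `X φ_j = α_j φ_{j+1} + β_j φ_j + γ_j φ_{j−1}` for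
`j ≥ 1`, with all `α_j ≠ 0`, and `Q` satisfies `Q_{i,j} = 0` for `i = 0`, `j = 0` or
`j > i`, `Q_{i,i} = i/α_{i−1}` for `i ≥ 1`, and for `i > j ≥ 1`
`Q_{i,j} = (1/α_{i−1}) ((β_{j−1} − β_{i−1}) Q_{i−1,j} + a_j Q_{i−1,j−1}
+ γ_j Q_{i−1,j+1} − γ_{i−1} Q_{i−2,j})` where `a_j = α_{j−2}` for `j ≥ 2` and
`a_1 = 0`, then `φ_i' = Σ_{j=1}^{i} Q_{i,j} φ_{j−1}` for all `i ≥ 1`. -/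
theorem degree_graded_differentiation_matrix
    (φ : ℕ → Polynomial ℝ) (hφ0 : φ 0 = 1)
    (α β γ : ℕ → ℝ) (hα : ∀ j, α j ≠ 0)
    (hrec0 : X * φ 0 = C (α 0) * φ 1 + C (β 0) * φ 0)
    (hrec : ∀ j, 1 ≤ j →
      X * φ j = C (α j) * φ (j + 1) + C (β j) * φ j + C (γ j) * φ (j - 1))
    (Q : ℕ → ℕ → ℝ)
    (hQzero : ∀ i j, i = 0 ∨ j = 0 ∨ i < j → Q i j = 0)
    (hQdiag : ∀ i, 1 ≤ i → Q i i = (i : ℝ) / α (i - 1))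
    (hQrec : ∀ i j, 1 ≤ j → j < i →
      Q i j = (1 / α (i - 1)) *
        ((β (j - 1) - β (i - 1)) * Q (i - 1) j +
          (if 2 ≤ j then α (j - 2) else 0) * Q (i - 1) (j - 1) +
            γ j * Q (i - 1) (j + 1) - γ (i - 1) * Q (i - 2) j)) :
    ∀ i, 1 ≤ i →
      derivative (φ i) = ∑ j ∈ Finset.Icc 1 i, C (Q i j) * φ (j - 1) := by
  -- uniform form of the recurrence
  have hX : ∀ k, X * φ k
      = C (α k) * φ (k+1) + C (β k) * φ k
        + C (if 1 ≤ k then γ k else 0) * φ (k-1) := by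
    intro k
    cases k with
    | zero => simpa using hrec0
    | succ p => simpa using hrec (p+1) (by omega)
  have hQ0 : ∀ i, Q i 0 = 0 := fun i => hQzero i 0 (Or.inr (Or.inl rfl))
  -- main claim, for all i, with range sums
  have key : ∀ i, derivative (φ i)
      = ∑ k ∈ Finset.range i, C (Q i (k+1)) * φ k := by
    intro i
    induction i using Nat.strong_induction_on with
    | _ i ih =>
      match i with
      | 0 => simp [hφ0]
      | 1 =>
        have h0 : X * (1 : ℝ[X]) = C (α 0) * φ 1 + C (β 0) * 1 := by
          rw [← hφ0]; exact hrec0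
        have hd : (1 : ℝ[X]) = C (α 0) * derivative (φ 1) := by
          have := congrArg derivative h0
          simpa using this
        have hC : C (α 0) ≠ 0 := by
          simpa using hα 0
        apply mul_left_cancel₀ hC
        rw [← hd, Finset.sum_range_one, hφ0, mul_one, hQdiag 1 (by omega), ← C_mul]
        rw [Nat.cast_one, mul_one_div, div_self (hα 0), C_1]
      | (m+2) =>
        have ihn := ih (m+1) (by omega)
        have ihm := ih m (by omega)
        set Sn := ∑ k ∈ Finset.range (m+1), C (Q (m+1) (k+1)) * φ k with hSn
        set Sm := ∑ k ∈ Finset.range m, C (Q m (k+1)) * φ k with hSm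
        -- differentiate the recurrence at index m+1
        have hd : φ (m+1) + X * Sn
            = C (α (m+1)) * derivative (φ (m+2)) + C (β (m+1)) * Sn
              + C (γ (m+1)) * Sm := by
          have h := congrArg derivative (hrec (m+1) (by omega))
          simp only [derivative_add, derivative_mul, derivative_X, derivative_C,
            one_mul, zero_mul, zero_add, Nat.add_sub_cancel] at h
          rw [ihn, ihm] at h
          exact h
        -- the bracket function
        set b : ℕ → ℝ := fun k =>
          (β k - β (m+1)) * Q (m+1) (k+1)
          + (if 1 ≤ k then α (k-1) else 0) * Q (m+1) k
          + γ (k+1) * Q (m+1) (k+2)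
          - γ (m+1) * Q m (k+1) with hbdef
        -- step 1 : α * LHS-sum = Σ b + φ (m+1)
        have hb : ∀ k ∈ Finset.range (m+1),
            C (α (m+1)) * (C (Q (m+2) (k+1)) * φ k) = C (b k) * φ k := by
          intro k hk
          rw [Finset.mem_range] at hk
          have hr : α (m+1) * Q (m+2) (k+1) = b k := by
            rw [hQrec (m+2) (k+1) (by omega) (by omega)]
            have e1 : m+2-1 = m+1 := rfl
            have e2 : m+2-2 = m := rfl
            have e3 : k+1-1 = k := rfl
            have e4 : k+1+1 = k+2 := rfl
            have hif : (if 2 ≤ k+1 then α (k+1-2) else 0)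
                = (if 1 ≤ k then α (k-1) else 0) := by
              by_cases h : 1 ≤ k
              · rw [if_pos (show (2:ℕ) ≤ k+1 by omega), if_pos h]
                all_goals (congr 1 <;> try omega)
              · rw [if_neg (show ¬ (2:ℕ) ≤ k+1 by omega), if_neg h]
            rw [e1, e2, e3, e4, hif, ← mul_assoc, mul_one_div,
              div_self (hα (m+1)), one_mul]
          rw [← mul_assoc, ← C_mul, hr]
        have htop : α (m+1) * Q (m+2) (m+2) = b (m+1) + 1 := by
          rw [hQdiag (m+2) (by omega), hbdef]
          have h1 : Q (m+1) (m+1+1) = 0 := hQzero _ _ (by omega)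
          have h2 : Q (m+1) (m+1+2) = 0 := hQzero _ _ (by omega)
          have h3 : Q m (m+1+1) = 0 := hQzero _ _ (by omega)
          simp only [h1, h2, h3, mul_zero, zero_mul, add_zero, sub_zero, zero_add]
          rw [hQdiag (m+1) (by omega), if_pos (by omega : (1:ℕ) ≤ m+1)]
          have e1 : m+2-1 = m+1 := rfl
          have e2 : m+1-1 = m := rfl
          rw [e1, e2, mul_comm (α (m+1)) _, mul_comm (α m) _,
            div_mul_cancel₀ _ (hα (m+1)), div_mul_cancel₀ _ (hα m)]
          push_cast
          ring
        have hsum1 : C (α (m+1)) * ∑ k ∈ Finset.range (m+2), C (Q (m+2) (k+1)) * φ k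
            = (∑ k ∈ Finset.range (m+2), C (b k) * φ k) + φ (m+1) := by
          rw [Finset.mul_sum]
          rw [Finset.sum_range_succ (fun k => C (α (m+1)) * (C (Q (m+2) (k+1)) * φ k)),
            Finset.sum_range_succ (fun k => C (b k) * φ k)]
          rw [Finset.sum_congr rfl hb]
          have htop' : C (α (m+1)) * (C (Q (m+2) (m+1+1)) * φ (m+1))
              = C (b (m+1)) * φ (m+1) + φ (m+1) := by
            rw [← mul_assoc, ← C_mul]
            rw [show Q (m+2) (m+1+1) = Q (m+2) (m+2) from rfl, htop,
              C_add, C_1, add_mul, one_mul]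
          rw [htop', add_assoc]
        -- step 2 : expand X * Sn
        have hXSn : X * Sn
            = (∑ k ∈ Finset.range (m+1), C (Q (m+1) (k+1) * α k) * φ (k+1))
              + (∑ k ∈ Finset.range (m+1), C (Q (m+1) (k+1) * β k) * φ k)
              + (∑ k ∈ Finset.range (m+1),
                  C (Q (m+1) (k+1) * (if 1 ≤ k then γ k else 0)) * φ (k-1)) := by
          rw [hSn, Finset.mul_sum, ← Finset.sum_add_distrib, ← Finset.sum_add_distrib]
          refine Finset.sum_congr rfl fun k _ => ?_
          rw [mul_left_comm, hX k]
          simp only [C_mul]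
          ring
        -- the four pieces
        have T1 : ∑ k ∈ Finset.range (m+2), C ((β k - β (m+1)) * Q (m+1) (k+1)) * φ k
            = (∑ k ∈ Finset.range (m+1), C (Q (m+1) (k+1) * β k) * φ k)
              - C (β (m+1)) * Sn := by
          rw [Finset.sum_range_succ]
          have h1 : ((β (m+1) - β (m+1)) * Q (m+1) (m+1+1)) = 0 := by ring_nf
          rw [h1, C_0, zero_mul, add_zero, hSn, Finset.mul_sum, ← Finset.sum_sub_distrib]
          refine Finset.sum_congr rfl fun k _ => ?_
          rw [← mul_assoc, ← C_mul, ← sub_mul, ← C_sub]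
          congr 1
          ring
        have T2 : ∑ k ∈ Finset.range (m+2),
              C ((if 1 ≤ k then α (k-1) else 0) * Q (m+1) k) * φ k
            = ∑ k ∈ Finset.range (m+1), C (Q (m+1) (k+1) * α k) * φ (k+1) := by
          rw [Finset.sum_range_succ']
          simp only [hQ0, mul_zero, C_0, zero_mul, add_zero]
          refine Finset.sum_congr rfl fun k _ => ?_
          rw [if_pos (by omega : (1:ℕ) ≤ k+1)]
          have e : k+1-1 = k := rfl
          rw [e]
          congr 1
          ring
        have T3 : ∑ k ∈ Finset.range (m+2), C (γ (k+1) * Q (m+1) (k+2)) * φ k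
            = ∑ k ∈ Finset.range (m+1),
                C (Q (m+1) (k+1) * (if 1 ≤ k then γ k else 0)) * φ (k-1) := by
          rw [Finset.sum_range_succ, Finset.sum_range_succ]
          have h1 : Q (m+1) (m+1+2) = 0 := hQzero _ _ (by omega)
          have h2 : Q (m+1) (m+2) = 0 := hQzero _ _ (by omega)
          simp only [h1, h2, mul_zero, C_0, zero_mul, add_zero]
          rw [Finset.sum_range_succ']
          simp only [if_neg (by omega : ¬ (1:ℕ) ≤ 0), mul_zero, C_0, zero_mul, add_zero]
          refine Finset.sum_congr rfl fun k _ => ?_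
          rw [if_pos (by omega : (1:ℕ) ≤ k+1)]
          have e : k+1-1 = k := rfl
          rw [e]
          congr 1
          ring
        have T4 : ∑ k ∈ Finset.range (m+2), C (γ (m+1) * Q m (k+1)) * φ k
            = C (γ (m+1)) * Sm := by
          rw [Finset.sum_range_succ, Finset.sum_range_succ]
          have h1 : Q m (m+1+1) = 0 := hQzero _ _ (by omega)
          have h2 : Q m (m+1) = 0 := hQzero _ _ (by omega)
          simp only [h1, h2, mul_zero, C_0, zero_mul, add_zero]
          rw [hSm, Finset.mul_sum]
          refine Finset.sum_congr rfl fun k _ => ?_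
          rw [← mul_assoc, ← C_mul]
        have hsum2 : ∑ k ∈ Finset.range (m+2), C (b k) * φ k
            = X * Sn - C (β (m+1)) * Sn - C (γ (m+1)) * Sm := by
          have hsplit : ∀ k, C (b k) * φ k
              = C ((β k - β (m+1)) * Q (m+1) (k+1)) * φ k
                + C ((if 1 ≤ k then α (k-1) else 0) * Q (m+1) k) * φ k
                + C (γ (k+1) * Q (m+1) (k+2)) * φ k
                - C (γ (m+1) * Q m (k+1)) * φ k := by
            intro k
            simp only [hbdef, C_add, C_sub]
            ring
          calc ∑ k ∈ Finset.range (m+2), C (b k) * φ k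
              = (∑ k ∈ Finset.range (m+2), C ((β k - β (m+1)) * Q (m+1) (k+1)) * φ k)
                + (∑ k ∈ Finset.range (m+2),
                    C ((if 1 ≤ k then α (k-1) else 0) * Q (m+1) k) * φ k)
                + (∑ k ∈ Finset.range (m+2), C (γ (k+1) * Q (m+1) (k+2)) * φ k)
                - (∑ k ∈ Finset.range (m+2), C (γ (m+1) * Q m (k+1)) * φ k) := by
                rw [← Finset.sum_add_distrib, ← Finset.sum_add_distrib,
                  ← Finset.sum_sub_distrib]
                exact Finset.sum_congr rfl fun k _ => hsplit k
            _ = X * Sn - C (β (m+1)) * Sn - C (γ (m+1)) * Sm := by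
                rw [T1, T2, T3, T4, hXSn]; ring
        -- combine
        have hid : C (α (m+1)) * ∑ k ∈ Finset.range (m+2), C (Q (m+2) (k+1)) * φ k
            = φ (m+1) + X * Sn - C (β (m+1)) * Sn - C (γ (m+1)) * Sm := by
          rw [hsum1, hsum2]; ring
        have hC : C (α (m+1)) ≠ 0 := by simpa using hα (m+1)
        apply mul_left_cancel₀ hC
        rw [hid]
        linear_combination -hd
  -- convert to Icc sums
  intro i _
  rw [key i]
  have hconv : ∀ (f : ℕ → ℝ[X]) (n : ℕ),
      ∑ j ∈ Finset.Icc 1 n, f j = ∑ k ∈ Finset.range n, f (k+1) := by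
    intro f n
    induction n with
    | zero => simp
    | succ p ih => rw [Finset.sum_range_succ, ← ih, Finset.sum_Icc_succ_top (by omega)]
  rw [hconv (fun j => C (Q i j) * φ (j - 1)) i]
  exact Finset.sum_congr rfl fun k _ => rfl
end
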